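/- The norm γ is finitely generated: for all Banach spaces X₁,…,Xₙ, Y and every u ∈ X₁ ⊗ ⋯ ⊗ Xₙ ⊗ Y, γ(u; X₁ ⊗ ⋯ ⊗ Xₙ ⊗ Y) = inf γ(u; E₁ ⊗ ⋯ ⊗ Eₙ ⊗ F), where the infimum is taken over all finite-dimensional subspaces Eᵢ ⊆ Xᵢ and F ⊆ Y such that u ∈ E₁ ⊗ ⋯ ⊗ Eₙ ⊗ F. -/

import Mathlib

open scoped NNReal

noncomputable section

universe u

variable (𝕜 : Type u) [RCLike 𝕜]

/-- A factorization of the bounded multilinear operator `T` through a Hilbert space: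
a Hilbert space `H`, a bounded multilinear operator `A` into `H`, and a Lipschitz map `B`
defined on the image of `A`, such that `T = B ∘ A`. -/
structure HilbertFactorization {n : ℕ} {X : Fin n → Type u} {Y : Type u}
    [∀ i, NormedAddCommGroup (X i)] [∀ i, NormedSpace 𝕜 (X i)]
    [NormedAddCommGroup Y] [NormedSpace 𝕜 Y]
    (T : ContinuousMultilinearMap 𝕜 X Y) where
  H : Type u
  [instNormed : NormedAddCommGroup H]
  [instInner : InnerProductSpace 𝕜 H]
  [instComplete : CompleteSpace H]
  A : ContinuousMultilinearMap 𝕜 X H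
  B : H → Y
  K : ℝ≥0
  lipschitz : LipschitzOnWith K B (Set.range fun x => A x)
  factors : ∀ x, T x = B (A x)

attribute [instance] HilbertFactorization.instNormed HilbertFactorization.instInner
  HilbertFactorization.instComplete

variable {𝕜}

/-- `T` factors through a Hilbert space. -/
def FactorsThroughHilbert {n : ℕ} {X : Fin n → Type u} {Y : Type u}
    [∀ i, NormedAddCommGroup (X i)] [∀ i, NormedSpace 𝕜 (X i)]
    [NormedAddCommGroup Y] [NormedSpace 𝕜 Y]
    (T : ContinuousMultilinearMap 𝕜 X Y) : Prop :=
  Nonempty (HilbertFactorization 𝕜 T)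

/-- The constant `Γ(T)`: the infimum of `‖A‖ · Lip(B)` over all factorizations of `T`
through a Hilbert space. -/
def gammaNorm {n : ℕ} {X : Fin n → Type u} {Y : Type u}
    [∀ i, NormedAddCommGroup (X i)] [∀ i, NormedSpace 𝕜 (X i)]
    [NormedAddCommGroup Y] [NormedSpace 𝕜 Y]
    (T : ContinuousMultilinearMap 𝕜 X Y) : ℝ :=
  sInf {c : ℝ | ∃ F : HilbertFactorization 𝕜 T, c = ‖F.A‖ * (F.K : ℝ)}

open scoped TensorProduct
open PiTensorProduct

variable (𝕜)

/-- The relation `≤_π` between finite families of (pairs of) decomposable tensors,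
parametrized by the generating tuples: `(pᵢ, qᵢ) ≤_π (aᵢ, bᵢ)` iff
`∑ᵢ |f_φ(pᵢ) − f_φ(qᵢ)|² ≤ ∑ᵢ |f_φ(aᵢ) − f_φ(bᵢ)|²` for every bounded multilinear
functional `φ` on `X₁ × ⋯ × Xₙ`. -/
def LePi {n m : ℕ} {X : Fin n → Type u}
    [∀ i, NormedAddCommGroup (X i)] [∀ i, NormedSpace 𝕜 (X i)]
    (p q a b : Fin m → ∀ i, X i) : Prop :=
  ∀ φ : ContinuousMultilinearMap 𝕜 X 𝕜,
    ∑ i, ‖φ (p i) - φ (q i)‖ ^ 2 ≤ ∑ i, ‖φ (a i) - φ (b i)‖ ^ 2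

/-- The tensor norm `γ` on `X₁ ⊗ ⋯ ⊗ Xₙ ⊗ Y`:
`γ(u) = inf (∑ᵢ π(aᵢ − bᵢ)²)^{1/2} (∑ᵢ ‖yᵢ‖²)^{1/2}`, the infimum over all representations
`u = ∑ᵢ (pᵢ − qᵢ) ⊗ yᵢ` with `pᵢ, qᵢ, aᵢ, bᵢ` decomposable and `(pᵢ, qᵢ) ≤_π (aᵢ, bᵢ)`. -/
def gammaTensor {n : ℕ} {X : Fin n → Type u} {Y : Type u}
    [∀ i, NormedAddCommGroup (X i)] [∀ i, NormedSpace 𝕜 (X i)]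
    [NormedAddCommGroup Y] [NormedSpace 𝕜 Y]
    (u : (⨂[𝕜] i, X i) ⊗[𝕜] Y) : ℝ :=
  sInf {r : ℝ | ∃ (m : ℕ) (p q a b : Fin m → ∀ i, X i) (y : Fin m → Y),
    (u = ∑ i, ((⨂ₜ[𝕜] j, p i j) - ⨂ₜ[𝕜] j, q i j) ⊗ₜ[𝕜] y i) ∧
    LePi 𝕜 p q a b ∧
    r = Real.sqrt (∑ i, projectiveSeminorm ((⨂ₜ[𝕜] j, a i j) - ⨂ₜ[𝕜] j, b i j) ^ 2) *
        Real.sqrt (∑ i, ‖y i‖ ^ 2)}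

variable {𝕜}

/-! `γ(u) ≤ γ(v)` whenever `v ∈ E₁ ⊗ ⋯ ⊗ Eₙ ⊗ F` maps to `u`: a representation of `v` is pushed
forward along the inclusions, which do not increase `π` and `‖·‖`, and `≤_π` survives because
functionals on `∏ Xᵢ` restrict to functionals on `∏ Eᵢ`.

Conversely, a representation `u = ∑ (pₖ - qₖ) ⊗ yₖ` with `(pₖ, qₖ) ≤_π (aₖ, bₖ)` lives in the
finite-dimensional subspaces spanned by the `pₖ, qₖ, yₖ` and by the vectors of nearly optimal
projective representations of `aₖ - bₖ`. Continuous projections `P` onto these subspaces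
(Hahn–Banach) move `aₖ, bₖ` into them: `≤_π` is kept since a functional on `∏ Eᵢ` composed with
`P` is one on `∏ Xᵢ`, and `π(⨂ P aₖ - ⨂ P bₖ)` exceeds `π(⨂ aₖ - ⨂ bₖ)` by at most `δ`, because
`P` fixes the vectors of the chosen representation. -/

open Set Submodule

section

namespace PiTensorProduct

variable {ι : Type*} [Fintype ι] {E E' : ι → Type*}
  [∀ i, SeminormedAddCommGroup (E i)] [∀ i, NormedSpace 𝕜 (E i)]
  [∀ i, SeminormedAddCommGroup (E' i)] [∀ i, NormedSpace 𝕜 (E' i)]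

theorem exists_mem_lifts_projectiveSeminormAux_lt (x : ⨂[𝕜] i, E i) {δ : ℝ} (hδ : 0 < δ) :
    ∃ L ∈ lifts x, projectiveSeminormAux L < ‖x‖ + δ := by
  obtain ⟨⟨L, hL⟩, h⟩ := exists_lt_of_ciInf_lt (lt_add_of_pos_right ‖x‖ hδ)
  exact ⟨L, hL, h⟩

theorem norm_map_le_projectiveSeminormAux (f : ∀ i, E i →ₗ[𝕜] E' i) {x : ⨂[𝕜] i, E i}
    {L : FreeAddMonoid (𝕜 × ∀ i, E i)} (hL : L ∈ lifts x)
    (hf : ∀ t ∈ L.toList, ∀ i, ‖f i (t.2 i)‖ ≤ ‖t.2 i‖) :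
    ‖map f x‖ ≤ projectiveSeminormAux L := by
  set L' : FreeAddMonoid (𝕜 × ∀ i, E' i) :=
    FreeAddMonoid.ofList (L.toList.map fun t => (t.1, fun i => f i (t.2 i)))
  have hL' : L' ∈ lifts (map f x) := by
    rw [mem_lifts_iff] at hL ⊢
    simp [L', ← hL, map_list_sum, Function.comp_def]
  refine (ciInf_le (bddBelow_projectiveSemiNormAux _) ⟨L', hL'⟩).trans ?_
  simp only [projectiveSeminormAux, L', FreeAddMonoid.toList_ofList, List.map_map]
  refine List.sum_le_sum fun t ht => mul_le_mul_of_nonneg_left ?_ (norm_nonneg _)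
  exact Finset.prod_le_prod (fun _ _ => norm_nonneg _) fun i _ => hf t ht i

end PiTensorProduct

theorem exists_pos_sqrt_sum_add_sq_mul_lt {ι : Type*} [Fintype ι] (x : ι → ℝ) (c : ℝ) {ε : ℝ}
    (hε : 0 < ε) : ∃ δ > 0, √(∑ k, (x k + δ) ^ 2) * c < √(∑ k, x k ^ 2) * c + ε := by
  have hcont : Continuous fun δ : ℝ => √(∑ k, (x k + δ) ^ 2) * c := by fun_prop
  have hnhds := hcont.continuousAt (x := 0) |>.eventually
    (gt_mem_nhds (lt_add_of_pos_right _ hε))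
  obtain ⟨η, hη, hball⟩ := Metric.eventually_nhds_iff.1 hnhds
  refine ⟨η / 2, half_pos hη, ?_⟩
  simpa using hball (y := η / 2) (by simp [abs_of_pos hη, hη])

variable {n : ℕ} {X : Fin n → Type u} {Y : Type u}
  [∀ i, NormedAddCommGroup (X i)] [∀ i, NormedSpace 𝕜 (X i)]
  [NormedAddCommGroup Y] [NormedSpace 𝕜 Y]

theorem LePi.compContinuousLinearMap {X' : Fin n → Type u} [∀ i, NormedAddCommGroup (X' i)]
    [∀ i, NormedSpace 𝕜 (X' i)] {m : ℕ} {p q a b : Fin m → ∀ i, X i} (h : LePi 𝕜 p q a b)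
    (f : ∀ i, X i →L[𝕜] X' i) :
    LePi 𝕜 (fun k i => f i (p k i)) (fun k i => f i (q k i)) (fun k i => f i (a k i))
      (fun k i => f i (b k i)) := fun φ => by
  simpa only [ContinuousMultilinearMap.compContinuousLinearMap_apply] using
    h (φ.compContinuousLinearMap f)

variable (𝕜) in
def gammaTensorSet (u : (⨂[𝕜] i, X i) ⊗[𝕜] Y) : Set ℝ :=
  {r : ℝ | ∃ (m : ℕ) (p q a b : Fin m → ∀ i, X i) (y : Fin m → Y),
    (u = ∑ i, ((⨂ₜ[𝕜] j, p i j) - ⨂ₜ[𝕜] j, q i j) ⊗ₜ[𝕜] y i) ∧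
    LePi 𝕜 p q a b ∧
    r = Real.sqrt (∑ i, projectiveSeminorm ((⨂ₜ[𝕜] j, a i j) - ⨂ₜ[𝕜] j, b i j) ^ 2) *
        Real.sqrt (∑ i, ‖y i‖ ^ 2)}

theorem bddBelow_gammaTensorSet (u : (⨂[𝕜] i, X i) ⊗[𝕜] Y) : BddBelow (gammaTensorSet 𝕜 u) :=
  ⟨0, by rintro _ ⟨m, p, q, a, b, y, -, -, rfl⟩; positivity⟩

theorem gammaTensor_nonneg (u : (⨂[𝕜] i, X i) ⊗[𝕜] Y) : 0 ≤ gammaTensor 𝕜 u :=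
  Real.sInf_nonneg <| by rintro _ ⟨m, p, q, a, b, y, -, -, rfl⟩; positivity

theorem gammaTensor_le_of_mem {u : (⨂[𝕜] i, X i) ⊗[𝕜] Y} {r : ℝ}
    (h : r ∈ gammaTensorSet 𝕜 u) : gammaTensor 𝕜 u ≤ r :=
  csInf_le (bddBelow_gammaTensorSet u) h

theorem exists_sum_tprod_tmul (u : (⨂[𝕜] i, X i) ⊗[𝕜] Y) :
    ∃ (m : ℕ) (d : Fin m → ∀ i, X i) (y : Fin m → Y), u = ∑ k, (⨂ₜ[𝕜] i, d k i) ⊗ₜ[𝕜] y k := by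
  have hspan : u ∈ span 𝕜 {t | ∃ (d : ∀ i, X i) (y : Y), (⨂ₜ[𝕜] i, d i) ⊗ₜ[𝕜] y = t} := by
    induction u using TensorProduct.induction_on with
    | zero => exact zero_mem _
    | tmul x y =>
      induction x using PiTensorProduct.induction_on with
      | smul_tprod r d =>
        rw [← TensorProduct.smul_tmul']
        exact smul_mem _ _ (subset_span ⟨d, y, rfl⟩)
      | add x x' hx hx' => rw [TensorProduct.add_tmul]; exact add_mem hx hx'
    | add u u' hu hu' => exact add_mem hu hu'
  obtain ⟨m, c, g, hu⟩ := mem_span_set'.1 hspan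
  choose d y hg using fun k => (g k).2
  exact ⟨m, d, fun k => c k • y k, by simp [← hu, ← hg, TensorProduct.tmul_smul]⟩

theorem gammaTensorSet_nonempty (hn : 0 < n) (u : (⨂[𝕜] i, X i) ⊗[𝕜] Y) :
    (gammaTensorSet 𝕜 u).Nonempty := by
  have : Nonempty (Fin n) := ⟨⟨0, hn⟩⟩
  have htprod_zero : (⨂ₜ[𝕜] i, (0 : X i)) = 0 := (PiTensorProduct.tprod 𝕜).map_zero
  obtain ⟨m, d, y, rfl⟩ := exists_sum_tprod_tmul u
  refine ⟨_, m, d, 0, d, 0, y, ?_, fun _ => le_rfl, rfl⟩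
  simp [htprod_zero]

theorem le_gammaTensor (hn : 0 < n) {u : (⨂[𝕜] i, X i) ⊗[𝕜] Y} {c : ℝ}
    (h : ∀ r ∈ gammaTensorSet 𝕜 u, c ≤ r) : c ≤ gammaTensor 𝕜 u :=
  le_csInf (gammaTensorSet_nonempty hn u) h

theorem gammaTensor_map_le (hn : 0 < n) {E : Fin n → Type u} {F : Type u}
    [∀ i, NormedAddCommGroup (E i)] [∀ i, NormedSpace 𝕜 (E i)]
    [NormedAddCommGroup F] [NormedSpace 𝕜 F]
    (f : ∀ i, E i →L[𝕜] X i) (hf : ∀ i, ‖f i‖ ≤ 1) (g : F →L[𝕜] Y) (hg : ‖g‖ ≤ 1)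
    (v : (⨂[𝕜] i, E i) ⊗[𝕜] F) :
    gammaTensor 𝕜 (TensorProduct.map (PiTensorProduct.map fun i => (f i : E i →ₗ[𝕜] X i))
      (g : F →ₗ[𝕜] Y) v) ≤ gammaTensor 𝕜 v := by
  refine le_gammaTensor hn ?_
  rintro _ ⟨m, p, q, a, b, y, rfl, hle, rfl⟩
  refine (gammaTensor_le_of_mem ⟨m, _, _, _, _, fun k => g (y k), ?_,
    hle.compContinuousLinearMap f, rfl⟩).trans ?_
  · simp [map_sum, map_sub, PiTensorProduct.map_tprod]
  · have hmapL : ‖PiTensorProduct.mapL f‖ ≤ 1 :=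
      (PiTensorProduct.opNorm_mapL f).trans (Finset.prod_le_one (fun _ _ => norm_nonneg _)
        fun i _ => hf i)
    gcongr with k
    · have hmap : (⨂ₜ[𝕜] i, f i (a k i)) - (⨂ₜ[𝕜] i, f i (b k i))
          = PiTensorProduct.mapL f ((⨂ₜ[𝕜] i, a k i) - ⨂ₜ[𝕜] i, b k i) := by
        simp [PiTensorProduct.mapL_apply, map_sub, PiTensorProduct.map_tprod]
      rw [hmap]
      exact (PiTensorProduct.mapL f).le_of_opNorm_le hmapL _ |>.trans_eq (one_mul _)
    · exact g.le_of_opNorm_le hg _ |>.trans_eq (one_mul _)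

theorem exists_gammaTensor_le_of_projections {E : ∀ i, Submodule 𝕜 (X i)} {F : Submodule 𝕜 Y}
    (P : ∀ i, X i →L[𝕜] E i) (hP : ∀ i (x : E i), P i x = x) {m : ℕ}
    {p q a b : Fin m → ∀ i, X i} {y : Fin m → Y} (hp : ∀ k i, p k i ∈ E i)
    (hq : ∀ k i, q k i ∈ E i) (hy : ∀ k, y k ∈ F) (hle : LePi 𝕜 p q a b)
    {L : Fin m → FreeAddMonoid (𝕜 × ∀ i, X i)}
    (hL : ∀ k, L k ∈ lifts ((⨂ₜ[𝕜] i, a k i) - ⨂ₜ[𝕜] i, b k i))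
    (hLE : ∀ k, ∀ t ∈ (L k).toList, ∀ i, t.2 i ∈ E i) :
    ∃ v : (⨂[𝕜] i, E i) ⊗[𝕜] F,
      TensorProduct.map (PiTensorProduct.map fun i => (E i).subtype) F.subtype v =
        ∑ k, ((⨂ₜ[𝕜] i, p k i) - ⨂ₜ[𝕜] i, q k i) ⊗ₜ[𝕜] y k ∧
      gammaTensor 𝕜 v ≤ √(∑ k, projectiveSeminormAux (L k) ^ 2) * √(∑ k, ‖y k‖ ^ 2) := by
  have hPE : ∀ i x, x ∈ E i → (P i x : X i) = x := fun i x hx =>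
    congrArg Subtype.val (hP i ⟨x, hx⟩)
  refine ⟨∑ k, ((⨂ₜ[𝕜] i, P i (p k i)) - ⨂ₜ[𝕜] i, P i (q k i)) ⊗ₜ[𝕜] ⟨y k, hy k⟩, ?_,
    (gammaTensor_le_of_mem ⟨m, _, _, fun k i => P i (a k i), fun k i => P i (b k i), _, rfl,
      hle.compContinuousLinearMap P, rfl⟩).trans ?_⟩
  · simp [map_sum, map_sub, PiTensorProduct.map_tprod, hPE _ _ (hp _ _), hPE _ _ (hq _ _)]
  · gcongr with k
    · have hmap : (⨂ₜ[𝕜] i, P i (a k i)) - (⨂ₜ[𝕜] i, P i (b k i))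
          = PiTensorProduct.map (fun i => (P i : X i →ₗ[𝕜] E i))
              ((⨂ₜ[𝕜] i, a k i) - ⨂ₜ[𝕜] i, b k i) := by
        simp [map_sub, PiTensorProduct.map_tprod]
      rw [hmap]
      refine norm_map_le_projectiveSeminormAux _ (hL k) fun t ht i => le_of_eq ?_
      rw [← norm_coe, ContinuousLinearMap.coe_coe, hPE _ _ (hLE k t ht i)]
    · rfl

theorem exists_finiteDimensional_gammaTensor_le {m : ℕ} {p q a b : Fin m → ∀ i, X i}
    {y : Fin m → Y} (hle : LePi 𝕜 p q a b) {δ : ℝ} (hδ : 0 < δ) :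
    ∃ (E : ∀ i, Submodule 𝕜 (X i)) (F : Submodule 𝕜 Y)
      (_ : ∀ i, FiniteDimensional 𝕜 (E i)) (_ : FiniteDimensional 𝕜 F)
      (v : (⨂[𝕜] i, E i) ⊗[𝕜] F),
      TensorProduct.map (PiTensorProduct.map fun i => (E i).subtype) F.subtype v =
        ∑ k, ((⨂ₜ[𝕜] i, p k i) - ⨂ₜ[𝕜] i, q k i) ⊗ₜ[𝕜] y k ∧
      gammaTensor 𝕜 v ≤
        √(∑ k, (projectiveSeminorm ((⨂ₜ[𝕜] i, a k i) - ⨂ₜ[𝕜] i, b k i) + δ) ^ 2) *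
          √(∑ k, ‖y k‖ ^ 2) := by
  choose L hL hLδ using fun k =>
    exists_mem_lifts_projectiveSeminormAux_lt ((⨂ₜ[𝕜] i, a k i) - ⨂ₜ[𝕜] i, b k i) hδ
  let S i : Set (X i) := range (fun k => p k i) ∪ range (fun k => q k i) ∪
    ⋃ k, (fun t : 𝕜 × ∀ j, X j => t.2 i) '' {t | t ∈ (L k).toList}
  have hS i : (S i).Finite := ((finite_range _).union (finite_range _)).union
    (finite_iUnion fun k => (List.finite_toSet _).image _)
  let E i := span 𝕜 (S i)
  have hE i : FiniteDimensional 𝕜 (E i) := FiniteDimensional.span_of_finite 𝕜 (hS i)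
  choose P hP using fun i => ClosedComplemented.of_finiteDimensional (E i)
  obtain ⟨v, hv, hγ⟩ := exists_gammaTensor_le_of_projections (F := span 𝕜 (range y)) P hP
    (fun k i => subset_span (Or.inl (Or.inl ⟨k, rfl⟩)))
    (fun k i => subset_span (Or.inl (Or.inr ⟨k, rfl⟩)))
    (fun k => subset_span ⟨k, rfl⟩) hle hL
    (fun k t ht i => subset_span (Or.inr (mem_iUnion.2 ⟨k, t, ht, rfl⟩)))
  refine ⟨E, _, hE, FiniteDimensional.span_of_finite 𝕜 (finite_range y), v, hv, hγ.trans ?_⟩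
  gcongr with k
  · exact projectiveSeminormAux_nonneg _
  · exact (hLδ k).le

end

theorem gammaTensor_finitely_generated_general {n : ℕ} (hn : 0 < n) {X : Fin n → Type u} {Y : Type u}
    [∀ i, NormedAddCommGroup (X i)] [∀ i, NormedSpace 𝕜 (X i)]
    [NormedAddCommGroup Y] [NormedSpace 𝕜 Y]
    (u : (⨂[𝕜] i, X i) ⊗[𝕜] Y) :
    gammaTensor 𝕜 u =
      sInf {r : ℝ | ∃ (E : ∀ i, Submodule 𝕜 (X i)) (F : Submodule 𝕜 Y)
        (_ : ∀ i, FiniteDimensional 𝕜 (E i)) (_ : FiniteDimensional 𝕜 F)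
        (v : (⨂[𝕜] i, E i) ⊗[𝕜] F),
        TensorProduct.map (PiTensorProduct.map fun i => (E i).subtype) F.subtype v = u ∧
        r = gammaTensor 𝕜 v} := by
  refine le_antisymm (le_csInf ?_ ?_) (le_gammaTensor hn ?_)
  · obtain ⟨_, m, p, q, a, b, y, rfl, hle, -⟩ := gammaTensorSet_nonempty hn u
    obtain ⟨E, F, hE, hF, v, hv, -⟩ :=
      exists_finiteDimensional_gammaTensor_le (y := y) hle one_pos
    exact ⟨_, E, F, hE, hF, v, hv, rfl⟩
  · rintro _ ⟨E, F, -, -, v, rfl, rfl⟩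
    exact gammaTensor_map_le hn (fun i => (E i).subtypeL) (fun i => norm_subtypeL_le _)
      F.subtypeL (norm_subtypeL_le F) v
  · rintro _ ⟨m, p, q, a, b, y, rfl, hle, rfl⟩
    refine le_of_forall_pos_le_add fun ε hε => ?_
    obtain ⟨δ, hδ, hδε⟩ := exists_pos_sqrt_sum_add_sq_mul_lt
      (fun k => projectiveSeminorm ((⨂ₜ[𝕜] i, a k i) - ⨂ₜ[𝕜] i, b k i)) √(∑ k, ‖y k‖ ^ 2) hε
    obtain ⟨E, F, hE, hF, v, hv, hγ⟩ := exists_finiteDimensional_gammaTensor_le (y := y) hle hδ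
    refine csInf_le_of_le ?_ ⟨E, F, hE, hF, v, hv, rfl⟩ (hγ.trans hδε.le)
    exact ⟨0, by rintro _ ⟨-, -, -, -, w, -, rfl⟩; exact gammaTensor_nonneg w⟩

/-- The norm `γ` is finitely generated: for all Banach spaces
`X₁,…,Xₙ, Y` and every `u ∈ X₁ ⊗ ⋯ ⊗ Xₙ ⊗ Y`,
`γ(u; X₁ ⊗ ⋯ ⊗ Xₙ ⊗ Y) = inf γ(v; E₁ ⊗ ⋯ ⊗ Eₙ ⊗ F)`, the infimum being over all
finite-dimensional subspaces `Eᵢ ⊆ Xᵢ` and `F ⊆ Y` and elements `v` of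
`E₁ ⊗ ⋯ ⊗ Eₙ ⊗ F` mapping to `u` under the canonical inclusion. -/
theorem gammaTensor_finitely_generated {n : ℕ} (hn : 0 < n) {X : Fin n → Type u} {Y : Type u}
    [∀ i, NormedAddCommGroup (X i)] [∀ i, NormedSpace 𝕜 (X i)] [∀ i, CompleteSpace (X i)]
    [NormedAddCommGroup Y] [NormedSpace 𝕜 Y] [CompleteSpace Y]
    (u : (⨂[𝕜] i, X i) ⊗[𝕜] Y) :
    gammaTensor 𝕜 u =
      sInf {r : ℝ | ∃ (E : ∀ i, Submodule 𝕜 (X i)) (F : Submodule 𝕜 Y)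
        (_ : ∀ i, FiniteDimensional 𝕜 (E i)) (_ : FiniteDimensional 𝕜 F)
        (v : (⨂[𝕜] i, E i) ⊗[𝕜] F),
        TensorProduct.map (PiTensorProduct.map fun i => (E i).subtype) F.subtype v = u ∧
        r = gammaTensor 𝕜 v} :=
  gammaTensor_finitely_generated_general hn u
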